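/- Let F be a finite field of cardinality q = p^ℓ with λ ∈ F^×, λ ≠ ±1. Then the polynomial X² + 1 has a root in F if and only if q ≢ 3 (mod 4). Consequently, (Euclidean) self-dual 2-quasi λ-constacyclic codes of length 2n over F exist if and only if q ≢ 3 (mod 4). -/

import Mathlib

/-- The `λ`-constacyclic shift on `Fⁿ`. -/
def cshift {F : Type*} [Field F] {n : ℕ} [NeZero n] (lam : F) (a : Fin n → F) :
    Fin n → F :=
  fun i => (if i = 0 then lam else 1) * a (i - 1)

/-- The Galois inner product `⟨a,b⟩ = ∑ aᵢ bᵢ^e` on `Fⁿ × Fⁿ` (`e = 1` is the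
Euclidean inner product). -/
def gin {F : Type*} [Field F] {n : ℕ} (e : ℕ)
    (a b : (Fin n → F) × (Fin n → F)) : F :=
  (∑ i, a.1 i * b.1 i ^ e) + (∑ i, a.2 i * b.2 i ^ e)

/-!
`X² + 1` has a root in `F` iff `-1` is a square, which in `𝔽_q` happens iff `q ≢ 3 (mod 4)`.
Given a root `α`, the graph `{(u, α u)}` is a self-dual code, and it is constacyclic since the
shift is linear. Conversely, the shift `T` satisfies
`⟨T c, T d⟩ = ⟨c, d⟩ + (λ² - 1)(c₁ d₁ + c₂ d₂)` with the correction read off at the last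
coordinate, so as `λ² ≠ 1` every codeword `c` of a self-dual constacyclic code has
`c₁² + c₂² = 0` at the last coordinate, and, by shifting, at every coordinate. A self-dual code
is nonzero, and a nonzero coordinate pair `(x, y)` with `x² + y² = 0` gives the root `y / x`.
-/

lemma exists_sq_add_one_eq_zero_iff_isSquare_neg_one {R : Type*} [CommRing R] :
    (∃ α : R, α ^ 2 + 1 = 0) ↔ IsSquare (-1 : R) :=
  ⟨fun ⟨α, hα⟩ => ⟨α, by rw [← sq]; linear_combination -hα⟩,
    fun ⟨α, hα⟩ => ⟨α, by rw [sq]; linear_combination -hα⟩⟩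

lemma exists_sq_add_one_eq_zero_of_sq_add_sq_eq_zero {F : Type*} [Field F] {x y : F}
    (hxy : x ^ 2 + y ^ 2 = 0) (hne : x ≠ 0 ∨ y ≠ 0) : ∃ α : F, α ^ 2 + 1 = 0 := by
  have hx : x ≠ 0 := by
    rintro rfl
    exact hne.elim (· rfl) (pow_ne_zero 2 · (by simpa using hxy))
  exact ⟨y / x, by field_simp; linear_combination hxy⟩

lemma eq_smul_iff_add_smul_eq_zero {R M : Type*} [CommRing R] [AddCommGroup M] [Module R M]
    {α : R} (hα : α ^ 2 + 1 = 0) {x y : M} : y = α • x ↔ x + α • y = 0 := by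
  constructor
  · rintro rfl
    linear_combination (norm := module) hα • x
  · intro h
    linear_combination (norm := module) hα • y - α • h

lemma gin_one {F : Type*} [Field F] {n : ℕ} (c d : (Fin n → F) × (Fin n → F)) :
    gin 1 c d = c.1 ⬝ᵥ d.1 + c.2 ⬝ᵥ d.2 := by
  simp only [gin, pow_one, dotProduct]

lemma Fin.val_zero_sub_one {n : ℕ} [NeZero n] : ((0 - 1 : Fin n) : ℕ) = n - 1 := by
  obtain ⟨m, rfl⟩ := Nat.exists_eq_succ_of_ne_zero (NeZero.ne n)
  simp

section Shift

variable {F : Type*} [Field F] {n : ℕ} [NeZero n]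

lemma cshift_smul (lam α : F) (a : Fin n → F) : cshift lam (α • a) = α • cshift lam a := by
  funext i
  simp only [cshift, Pi.smul_apply, smul_eq_mul]
  ring

lemma cshift_apply_succ (lam : F) (a : Fin n → F) {j : ℕ} (hj : j + 1 < n) :
    cshift lam a ⟨j + 1, hj⟩ = a ⟨j, by omega⟩ := by
  have hne : (⟨j + 1, hj⟩ : Fin n) ≠ 0 := by simp [Fin.ext_iff]
  have hsub : (⟨j + 1, hj⟩ - 1 : Fin n) = ⟨j, by omega⟩ := by
    ext; rw [Fin.val_sub_one_of_ne_zero hne]; rfl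
  simp [cshift, hne, hsub]

lemma cshift_dotProduct (lam : F) (a b : Fin n → F) :
    cshift lam a ⬝ᵥ cshift lam b = a ⬝ᵥ b + (lam ^ 2 - 1) * (a (0 - 1) * b (0 - 1)) := by
  have hterm : ∀ i : Fin n, cshift lam a i * cshift lam b i = a (i - 1) * b (i - 1)
      + if i = 0 then (lam ^ 2 - 1) * (a (0 - 1) * b (0 - 1)) else 0 := by
    intro i
    by_cases h : i = 0
    · simp [cshift, h]; ring
    · simp [cshift, h]
  simp only [dotProduct, hterm, Finset.sum_add_distrib, Finset.sum_ite_eq', Finset.mem_univ,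
    if_true]
  congr 1
  exact Fintype.sum_equiv (Equiv.subRight 1) _ _ fun _ => rfl

end Shift

section SelfDual

variable {F : Type*} [Field F] {n : ℕ} [NeZero n] {lam : F}
  {S : Set ((Fin n → F) × (Fin n → F))}

lemma sq_add_sq_last_eq_zero (hlam : lam ^ 2 ≠ 1)
    (hT : ∀ c ∈ S, (cshift lam c.1, cshift lam c.2) ∈ S) (hiso : ∀ c ∈ S, gin 1 c c = 0)
    {c : (Fin n → F) × (Fin n → F)} (hc : c ∈ S) :
    c.1 (0 - 1) ^ 2 + c.2 (0 - 1) ^ 2 = 0 := by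
  have hshift := hiso _ (hT c hc)
  have h := hiso c hc
  rw [gin_one, cshift_dotProduct, cshift_dotProduct] at hshift
  rw [gin_one] at h
  have : (lam ^ 2 - 1) * (c.1 (0 - 1) ^ 2 + c.2 (0 - 1) ^ 2) = 0 := by
    linear_combination hshift - h
  exact (mul_eq_zero.mp this).resolve_left (sub_ne_zero.mpr hlam)

lemma forall_coord_of_forall_last (P : F → F → Prop)
    (hT : ∀ c ∈ S, (cshift lam c.1, cshift lam c.2) ∈ S)
    (hlast : ∀ c ∈ S, P (c.1 (0 - 1)) (c.2 (0 - 1)))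
    {c : (Fin n → F) × (Fin n → F)} (hc : c ∈ S) (j : Fin n) : P (c.1 j) (c.2 j) := by
  suffices ∀ k, ∀ c ∈ S, ∀ j : Fin n, j.val + k = n - 1 → P (c.1 j) (c.2 j) from
    this _ c hc j (Nat.add_sub_cancel' (by omega))
  intro k
  induction k with
  | zero =>
    intro c hc j hj
    have : j = 0 - 1 := Fin.ext (by rw [Fin.val_zero_sub_one]; omega)
    exact this ▸ hlast c hc
  | succ k ih =>
    intro c hc j hj
    have hj' : j.val + 1 < n := by omega
    simpa [cshift_apply_succ] using ih _ (hT c hc) ⟨j.val + 1, hj'⟩ (by simp; omega)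

lemma exists_ne_zero_mem_of_eq_orthogonal (hdual : S = {a | ∀ c ∈ S, gin 1 c a = 0}) :
    ∃ c ∈ S, c ≠ 0 := by
  by_contra! h
  obtain ⟨x, hx⟩ := exists_ne (0 : (Fin n → F) × (Fin n → F))
  have : x ∈ S := by
    rw [hdual]
    intro c hc
    simp [h c hc, gin]
  exact hx (h x this)

theorem exists_sq_add_one_eq_zero_of_selfDual (hlam : lam ^ 2 ≠ 1)
    (hT : ∀ c ∈ S, (cshift lam c.1, cshift lam c.2) ∈ S)
    (hdual : S = {a | ∀ c ∈ S, gin 1 c a = 0}) : ∃ α : F, α ^ 2 + 1 = 0 := by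
  have hiso : ∀ c ∈ S, gin 1 c c = 0 := fun c hc => (Set.ext_iff.mp hdual c).mp hc c hc
  obtain ⟨c, hc, hne⟩ := exists_ne_zero_mem_of_eq_orthogonal hdual
  obtain ⟨j, hj⟩ : ∃ j, c.1 j ≠ 0 ∨ c.2 j ≠ 0 := by
    by_contra! h
    exact hne (Prod.ext (funext fun j => (h j).1) (funext fun j => (h j).2))
  exact exists_sq_add_one_eq_zero_of_sq_add_sq_eq_zero
    (forall_coord_of_forall_last (fun x y => x ^ 2 + y ^ 2 = 0) hT
      (fun _ => sq_add_sq_last_eq_zero hlam hT hiso) hc j) hj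

end SelfDual

section Graph

variable {F : Type*} [Field F] {n : ℕ}

/-- The code with generator matrix `(Eₙ, α Eₙ)`. -/
def smulGraph (n : ℕ) (α : F) : Submodule F ((Fin n → F) × (Fin n → F)) :=
  (α • LinearMap.id).graph

lemma mem_smulGraph {α : F} {c : (Fin n → F) × (Fin n → F)} :
    c ∈ smulGraph n α ↔ c.2 = α • c.1 :=
  LinearMap.mem_graph_iff _ c

lemma gin_one_mk_smul (α : F) (u : Fin n → F) (x : (Fin n → F) × (Fin n → F)) :
    gin 1 (u, α • u) x = u ⬝ᵥ (x.1 + α • x.2) := by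
  rw [gin_one, dotProduct_add, smul_dotProduct, dotProduct_smul]

lemma coe_smulGraph_eq_orthogonal {α : F} (hα : α ^ 2 + 1 = 0) :
    (smulGraph n α : Set ((Fin n → F) × (Fin n → F)))
      = {a | ∀ c ∈ smulGraph n α, gin 1 c a = 0} := by
  ext x
  simp only [SetLike.mem_coe, mem_smulGraph, Set.mem_ofPred_eq]
  calc x.2 = α • x.1 ↔ x.1 + α • x.2 = 0 := eq_smul_iff_add_smul_eq_zero hα
    _ ↔ ∀ u, u ⬝ᵥ (x.1 + α • x.2) = 0 := by
      simp_rw [dotProduct_comm _ (x.1 + α • x.2)]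
      exact dotProduct_eq_zero_iff.symm
    _ ↔ ∀ c : (Fin n → F) × (Fin n → F), c.2 = α • c.1 → gin 1 c x = 0 := by
      refine ⟨fun h c hc => ?_, fun h u => gin_one_mk_smul α u x ▸ h (u, α • u) rfl⟩
      rw [← Prod.mk.eta (p := c), hc, gin_one_mk_smul]
      exact h c.1

lemma cshift_mem_smulGraph [NeZero n] (lam : F) {α : F} {c : (Fin n → F) × (Fin n → F)}
    (hc : c ∈ smulGraph n α) : (cshift lam c.1, cshift lam c.2) ∈ smulGraph n α := by
  rw [mem_smulGraph] at hc ⊢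
  rw [hc, cshift_smul]

end Graph

theorem stmt_11_general {F : Type*} [Field F] [Fintype F] {n : ℕ} [NeZero n]
    (lam : F) (h1 : lam ≠ 1) (h2 : lam ≠ -1) :
    ((∃ α : F, α ^ 2 + 1 = 0) ↔ ¬ Fintype.card F % 4 = 3) ∧
    ((∃ C : Submodule F ((Fin n → F) × (Fin n → F)),
        (∀ c ∈ C, (cshift lam c.1, cshift lam c.2) ∈ C) ∧
        (C : Set ((Fin n → F) × (Fin n → F))) = {a | ∀ c ∈ C, gin 1 c a = 0}) ↔
      ¬ Fintype.card F % 4 = 3) := by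
  have hroot : (∃ α : F, α ^ 2 + 1 = 0) ↔ ¬ Fintype.card F % 4 = 3 :=
    exists_sq_add_one_eq_zero_iff_isSquare_neg_one.trans FiniteField.isSquare_neg_one_iff
  refine ⟨hroot, Iff.trans ⟨?_, ?_⟩ hroot⟩
  · rintro ⟨C, hT, hdual⟩
    exact exists_sq_add_one_eq_zero_of_selfDual (sq_ne_one_iff.mpr ⟨h1, h2⟩) hT hdual
  · rintro ⟨α, hα⟩
    exact ⟨smulGraph n α, fun c => cshift_mem_smulGraph lam, coe_smulGraph_eq_orthogonal hα⟩

theorem stmt_11 {F : Type*} [Field F] [Fintype F] {n : ℕ} [NeZero n]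
    (lam : F) (hlam : lam ≠ 0) (h1 : lam ≠ 1) (h2 : lam ≠ -1) :
    ((∃ α : F, α ^ 2 + 1 = 0) ↔ ¬ Fintype.card F % 4 = 3) ∧
    ((∃ C : Submodule F ((Fin n → F) × (Fin n → F)),
        (∀ c ∈ C, (cshift lam c.1, cshift lam c.2) ∈ C) ∧
        (C : Set ((Fin n → F) × (Fin n → F))) = {a | ∀ c ∈ C, gin 1 c a = 0}) ↔
      ¬ Fintype.card F % 4 = 3) :=
  stmt_11_general lam h1 h2
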